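/- arXiv:1601.04271 — 2 statements merged into one kernel-verified Lean document; each statement's English description precedes it below -/
import Mathlib

section
/- Conversely, if T is a 2n×2n diagonal matrix and there exists a 2n×n rank-n matrix V with span(T V) = span(V) such that no standard basis vector lies in span(V) and every row of V is nonzero, then every diagonal entry of T occurs at least twice. -/
/-!
If `t l` were a simple eigenvalue of `D = diagonal t`, the polynomial `p = ∏_{k ≠ l} (X - t k)`
would make `p(D)` a nonzero multiple of the coordinate projection onto `e_l`. A `D`-invariant
subspace is `p(D)`-invariant, so it would contain `e_l` as soon as one of its vectors has a nonzero
`l`-th coordinate, which a nonzero `l`-th row of `V` provides.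
-/

open Matrix

noncomputable section

/-- Column space of a matrix, as the range of its `mulVec` linear map. -/
def colSpace {m n : ℕ} (V : Matrix (Fin m) (Fin n) ℂ) : Submodule ℂ (Fin m → ℂ) :=
  LinearMap.range V.mulVecLin

/-- `v` is an eigenvector of `T`. -/
def IsEigenvector {m : ℕ} (T : Matrix (Fin m) (Fin m) ℂ) (v : Fin m → ℂ) : Prop :=
  v ≠ 0 ∧ ∃ γ : ℂ, T.mulVec v = γ • v

open Polynomial

theorem Submodule.single_mem_of_smul_mem {ι K : Type*} [Fintype ι] [DecidableEq ι] [Field K]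
    {W : Submodule K (ι → K)} {t : ι → K} (hW : ∀ w ∈ W, t • w ∈ W) {l : ι}
    (hl : ∀ k ≠ l, t k ≠ t l) {w : ι → K} (hw : w ∈ W) (hwl : w l ≠ 0) :
    Pi.single l 1 ∈ W := by
  set p : K[X] := ∏ k ∈ Finset.univ.erase l, (X - C (t k))
  have hpl : p.eval (t l) ≠ 0 := by
    simp only [p, eval_prod, eval_sub, eval_X, eval_C]
    exact Finset.prod_ne_zero_iff.2 fun k hk => sub_ne_zero.2 (hl k (Finset.ne_of_mem_erase hk)).symm
  have hpk : ∀ k ≠ l, p.eval (t k) = 0 := fun k hk => by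
    simp only [p, eval_prod, eval_sub, eval_X, eval_C]
    exact Finset.prod_eq_zero (Finset.mem_erase.2 ⟨hk, Finset.mem_univ k⟩) (sub_self _)
  have hpw : aeval t p • w = (p.eval (t l) * w l) • Pi.single l 1 := by
    funext k
    by_cases hk : k = l
    · subst hk; simp [aeval_pi_apply, coe_aeval_eq_eval]
    · simp [aeval_pi_apply, coe_aeval_eq_eval, hk, hpk k hk]
  have hmem : aeval t p • w ∈ W :=
    aeval_apply_smul_mem_of_le_comap' hw p t fun v hv => hW v hv
  rw [hpw] at hmem
  have := W.smul_mem (p.eval (t l) * w l)⁻¹ hmem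
  rwa [smul_smul, inv_mul_cancel₀ (mul_ne_zero hpl hwl), one_smul] at this

theorem mulVec_mem_colSpace_mul {m n : ℕ} (A : Matrix (Fin m) (Fin m) ℂ)
    {V : Matrix (Fin m) (Fin n) ℂ} {w : Fin m → ℂ} (hw : w ∈ colSpace V) :
    A *ᵥ w ∈ colSpace (A * V) := by
  obtain ⟨x, rfl⟩ := hw
  exact ⟨x, by simp [mulVec_mulVec]⟩

theorem exists_mem_colSpace_apply_ne_zero {m n : ℕ} {V : Matrix (Fin m) (Fin n) ℂ} {i : Fin m}
    (hi : (fun j => V i j) ≠ 0) : ∃ w ∈ colSpace V, w i ≠ 0 := by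
  obtain ⟨j, hj⟩ := Function.ne_iff.1 hi
  exact ⟨V *ᵥ Pi.single j 1, ⟨Pi.single j 1, rfl⟩, by simpa [mulVec_single_one] using hj⟩

theorem stmt_8_general (n : ℕ) (t : Fin (2*n) → ℂ)
    (V : Matrix (Fin (2*n)) (Fin n) ℂ)
    (hspan : colSpace (Matrix.diagonal t * V) = colSpace V)
    (hbasis : ∀ k : Fin (2*n), (Pi.single k 1 : Fin (2*n) → ℂ) ∉ colSpace V)
    (hrows : ∀ i : Fin (2*n), (fun j => V i j) ≠ 0) :
    ∀ l, ∃ k, k ≠ l ∧ t k = t l := by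
  intro l
  by_contra! hsimple
  have hinv : ∀ w ∈ colSpace V, t • w ∈ colSpace V := fun w hw => by
    have := hspan ▸ mulVec_mem_colSpace_mul (diagonal t) hw
    rwa [show diagonal t *ᵥ w = t • w from funext (mulVec_diagonal t w)] at this
  obtain ⟨w, hw, hwl⟩ := exists_mem_colSpace_apply_ne_zero (hrows l)
  exact hbasis l (Submodule.single_mem_of_smul_mem hinv hsimple hw hwl)

theorem stmt_8 (n : ℕ) (t : Fin (2*n) → ℂ)
    (V : Matrix (Fin (2*n)) (Fin n) ℂ) (hrank : V.rank = n)
    (hspan : colSpace (Matrix.diagonal t * V) = colSpace V)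
    (hbasis : ∀ k : Fin (2*n), (Pi.single k 1 : Fin (2*n) → ℂ) ∉ colSpace V)
    (hrows : ∀ i : Fin (2*n), (fun j => V i j) ≠ 0) :
    ∀ l, ∃ k, k ≠ l ∧ t k = t l :=
  stmt_8_general n t V hspan hbasis hrows
end
end

section
/- A diagonal 2n×2n matrix T has every diagonal value occurring at least twice if and only if there is a permutation matrix P, an integer 1 ≤ n₁ ≤ n, an invertible n₁×n₁ diagonal matrix T̃, and a 2(n−n₁)×2(n−n₁) diagonal matrix F whose diagonal entries all belong to the set of diagonal entries of T̃, such that T = P · blockdiag(T̃, T̃, F) · Pᵀ. -/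
open Matrix

noncomputable section

/-- Reindexing equivalence for the block structure `blockdiag(T̃, T̃, F)`. -/
def blkEquiv (n n1 : ℕ) (h : n1 ≤ n) :
    (Fin n1 ⊕ (Fin n1 ⊕ Fin (2*(n-n1)))) ≃ Fin (2*n) :=
  (Equiv.sumCongr (Equiv.refl (Fin n1)) finSumFinEquiv).trans
    (finSumFinEquiv.trans (finCongr (by omega)))

/-! Every value of `t` occurs at least twice exactly when the multiset `M` of values of `t`
contains its underlying set `D` twice. Then `M = D + D + R` with `R := M - 2 • D ⊆ D`; enumerating
`D` gives `T̃` and enumerating `R` gives `F`. Two functions on finite types with the same multiset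
of values differ by a bijection of their domains, which yields the permutation `σ`. -/

open Finset

namespace Multiset

variable {α : Type*}

theorem exists_fin_map_univ_eq (s : Multiset α) {k : ℕ} (hk : card s = k) :
    ∃ f : Fin k → α, univ.val.map f = s := by
  obtain ⟨l, rfl⟩ : ∃ l : List α, ↑l = s := ⟨s.toList, coe_toList s⟩
  rw [coe_card] at hk
  subst hk
  exact ⟨l.get, by rw [Fin.univ_val_map, List.ofFn_get]⟩

variable [DecidableEq α] {s : Multiset α}

theorem two_nsmul_dedup_le (h : ∀ a ∈ s, 2 ≤ s.count a) : 2 • s.dedup ≤ s := by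
  refine le_iff_count.mpr fun a => ?_
  by_cases ha : a ∈ s
  · simpa [count_nsmul, count_dedup, ha] using h a ha
  · simp [ha]

theorem two_le_count_of_eq_add_add {u r : Multiset α} (hs : s = u + u + r) (hr : r ⊆ u)
    {a : α} (ha : a ∈ s) : 2 ≤ s.count a := by
  have hu : a ∈ u := by
    rw [hs] at ha
    simp only [mem_add, or_self] at ha
    exact ha.elim id (@hr a)
  rw [hs, count_add, count_add]
  have := count_pos.mpr hu
  omega

theorem exists_fin_eq_add_add_of_two_le_count {n : ℕ} (hcard : card s = 2 * n)
    (h : ∀ a ∈ s, 2 ≤ s.count a) :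
    ∃ m ≤ n, ∃ (u : Fin m → α) (r : Fin (2 * (n - m)) → α), univ.val.map u = s.dedup ∧
      (∀ j, ∃ i, r j = u i) ∧ s = univ.val.map u + univ.val.map u + univ.val.map r := by
  have hle := two_nsmul_dedup_le h
  have hcard_le := card_le_card hle
  rw [card_nsmul, hcard] at hcard_le
  have hm : card s.dedup ≤ n := by omega
  obtain ⟨u, hu⟩ := exists_fin_map_univ_eq s.dedup rfl
  obtain ⟨r, hr⟩ := exists_fin_map_univ_eq (s - 2 • s.dedup) (k := 2 * (n - card s.dedup))
    (by rw [card_sub hle, hcard, card_nsmul]; omega)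
  refine ⟨_, hm, u, r, hu, fun j => ?_, ?_⟩
  · have hj : r j ∈ univ.val.map u := by
      rw [hu, mem_dedup]
      exact mem_of_le (hr ▸ tsub_le_self) (mem_map_of_mem r (mem_univ_val j))
    obtain ⟨i, -, hi⟩ := mem_map.mp hj
    exact ⟨i, hi.symm⟩
  · rw [hu, hr, ← two_nsmul, add_tsub_cancel_of_le hle]

end Multiset

section Fintype

variable {ι κ α : Type*} [Fintype ι] [Fintype κ]

theorem Fintype.card_fiber_eq_count [DecidableEq α] (f : ι → α) (a : α) :
    Fintype.card {i // f i = a} = (univ.val.map f).count a := by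
  rw [Multiset.count_map, Fintype.card_subtype]
  simp [eq_comm, Finset.card]

theorem Equiv.exists_comp_eq_of_map_univ_eq (f : ι → α) (g : κ → α)
    (h : univ.val.map f = univ.val.map g) : ∃ e : ι ≃ κ, g ∘ e = f := by
  classical
  have hfiber (a : α) : Fintype.card {i // f i = a} = Fintype.card {k // g k = a} := by
    rw [Fintype.card_fiber_eq_count f, Fintype.card_fiber_eq_count g, h]
  exact ⟨Equiv.ofFiberEquiv fun a => Fintype.equivOfCardEq (hfiber a),
    funext <| Equiv.ofFiberEquiv_map _⟩

theorem forall_exists_ne_apply_eq_iff_two_le_count [DecidableEq α] (t : ι → α) :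
    (∀ l, ∃ k, k ≠ l ∧ t k = t l) ↔ ∀ a ∈ univ.val.map t, 2 ≤ (univ.val.map t).count a := by
  simp only [Multiset.mem_map, mem_val, mem_univ, true_and, forall_exists_index,
    forall_apply_eq_imp_iff, ← Fintype.card_fiber_eq_count, Nat.succ_le_iff]
  refine forall_congr' fun l => ?_
  rw [Fintype.one_lt_card_iff_nontrivial, nontrivial_iff_exists_ne (⟨l, rfl⟩ : {k // t k = t l})]
  simp [Subtype.ext_iff, and_comm]

theorem Fintype.map_univ_val_sumElim (f : ι → α) (g : κ → α) :
    univ.val.map (Sum.elim f g) = univ.val.map f + univ.val.map g := by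
  rw [← univ_disjSum_univ, val_disjSum, Multiset.map_disjSum]
  rfl

theorem Fintype.map_univ_val_comp_equiv (f : κ → α) (e : ι ≃ κ) :
    univ.val.map (f ∘ e) = univ.val.map f := by
  rw [← Multiset.map_map, Multiset.map_univ_val_equiv]

end Fintype

theorem Equiv.Perm.permMatrix_mul_diagonal_mul_transpose {n R : Type*} [DecidableEq n]
    [Fintype n] [NonAssocSemiring R] (σ : Equiv.Perm n) (v : n → R) :
    σ.permMatrix R * diagonal v * (σ.permMatrix R)ᵀ = diagonal (v ∘ σ) := by
  rw [Equiv.Perm.permMatrix, ← PEquiv.toMatrix_symm, ← Equiv.toPEquiv_symm,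
    PEquiv.mul_toMatrix_toPEquiv, PEquiv.toMatrix_toPEquiv_mul, submatrix_submatrix,
    Equiv.symm_symm, Function.comp_id, Function.id_comp, submatrix_diagonal_equiv]

theorem reindex_blkEquiv_fromBlocks_diagonal {R : Type*} [Zero R] {n n1 : ℕ} (h : n1 ≤ n)
    (Tt : Fin n1 → R) (F : Fin (2*(n-n1)) → R) :
    reindex (blkEquiv n n1 h) (blkEquiv n n1 h)
      (fromBlocks (diagonal Tt) 0 0 (fromBlocks (diagonal Tt) 0 0 (diagonal F))) =
    diagonal (Sum.elim Tt (Sum.elim Tt F) ∘ (blkEquiv n n1 h).symm) := by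
  rw [fromBlocks_diagonal, fromBlocks_diagonal, reindex_apply, submatrix_diagonal_equiv]

theorem map_univ_val_sumElim_comp_blkEquiv_symm {α : Type*} {n n1 : ℕ} (h : n1 ≤ n)
    (Tt : Fin n1 → α) (F : Fin (2*(n-n1)) → α) :
    univ.val.map (Sum.elim Tt (Sum.elim Tt F) ∘ (blkEquiv n n1 h).symm) =
      univ.val.map Tt + univ.val.map Tt + univ.val.map F := by
  rw [Fintype.map_univ_val_comp_equiv,
    Fintype.map_univ_val_sumElim, Fintype.map_univ_val_sumElim, add_assoc]

theorem stmt_9 (n : ℕ) (hn : 1 ≤ n) (t : Fin (2*n) → ℂ) (ht0 : ∀ i, t i ≠ 0) :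
    (∀ l, ∃ k, k ≠ l ∧ t k = t l) ↔
    ∃ (σ : Equiv.Perm (Fin (2*n))) (n1 : ℕ) (_ : 1 ≤ n1) (h2 : n1 ≤ n)
      (Tt : Fin n1 → ℂ) (F : Fin (2*(n-n1)) → ℂ),
      (∀ i, Tt i ≠ 0) ∧ (∀ j, ∃ i, F j = Tt i) ∧
      Matrix.diagonal t =
        (σ.permMatrix ℂ) *
          (Matrix.reindex (blkEquiv n n1 h2) (blkEquiv n n1 h2)
            (Matrix.fromBlocks (Matrix.diagonal Tt) 0 0
              (Matrix.fromBlocks (Matrix.diagonal Tt) 0 0 (Matrix.diagonal F)))) *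
          (σ.permMatrix ℂ)ᵀ := by
  classical
  simp_rw [reindex_blkEquiv_fromBlocks_diagonal, Equiv.Perm.permMatrix_mul_diagonal_mul_transpose,
    diagonal_injective.eq_iff, forall_exists_ne_apply_eq_iff_two_le_count]
  constructor
  · intro h
    obtain ⟨m, hm, Tt, F, hTt, hF, ht⟩ :=
      Multiset.exists_fin_eq_add_add_of_two_le_count (n := n) (by simp) h
    obtain ⟨σ, hσ⟩ := Equiv.exists_comp_eq_of_map_univ_eq t
      (Sum.elim Tt (Sum.elim Tt F) ∘ (blkEquiv n m hm).symm)
      (by rw [map_univ_val_sumElim_comp_blkEquiv_symm, ← ht])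
    refine ⟨σ, m, Nat.pos_of_ne_zero fun hm0 => ?_, hm, Tt, F, fun i hi => ?_, hF, hσ.symm⟩
    · subst hm0
      exact (hF ⟨0, by omega⟩).elim fun i _ => i.elim0
    · have hTt_mem : Tt i ∈ (univ.val.map t).dedup :=
        hTt ▸ Multiset.mem_map_of_mem Tt (mem_univ_val i)
      obtain ⟨k, -, hk⟩ := Multiset.mem_map.mp (Multiset.mem_dedup.mp hTt_mem)
      exact ht0 k (hk.trans hi)
  · rintro ⟨σ, m, -, hm, Tt, F, -, hF, rfl⟩ a ha
    rw [Fintype.map_univ_val_comp_equiv, map_univ_val_sumElim_comp_blkEquiv_symm] at ha ⊢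
    refine Multiset.two_le_count_of_eq_add_add rfl (fun b hb => ?_) ha
    obtain ⟨j, -, rfl⟩ := Multiset.mem_map.mp hb
    obtain ⟨i, hi⟩ := hF j
    exact hi ▸ Multiset.mem_map_of_mem Tt (mem_univ_val i)
end
end
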